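/- arXiv:1504.05987 — 3 statements merged into one kernel-verified Lean document; each statement's English description precedes it below -/
import Mathlib

section
/- Let a and b be integers with 2 ≤ a ≤ b, let G = C_{2a} □ C_{2b}, and let c be a 2-coloring of the edges of G in which every 4-cycle of G is properly colored. Then every edge of G in one coordinate direction receives one color and every edge in the other coordinate direction receives the other color; consequently, any two vertices of G are connected by a walk that changes colors at most once. -/
/-! At a vertex, an edge in the first direction and an edge in the second one are consecutive
edges of a 4-cycle, so they receive different colors. Hence every vertex `p` carries a color
`φ p` shared by all its first-direction edges and opposite to all its second-direction edges.
Whichever direction an edge `pq` has, this forces `φ p = φ q`, so `φ` is constant on the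
connected torus. A walk that first moves in the first direction and then in the second one
then changes colors at most once. -/

open SimpleGraph

/-- The number of color changes along a list of edges: the number of consecutive
pairs receiving different colors. -/
def colorChanges {V : Type*} (c : Sym2 V → Bool) : List (Sym2 V) → ℕ
  | e₁ :: e₂ :: rest => (if c e₁ = c e₂ then 0 else 1) + colorChanges c (e₂ :: rest)
  | _ => 0

/-- The cycle graph `C n` on `ZMod n`: `u` and `v` adjacent iff they are distinct and
differ by `±1`.  (For `n = 2` this is the complete graph on two vertices.) -/
def cycleG (n : ℕ) : SimpleGraph (ZMod n) where
  Adj u v := u ≠ v ∧ (u - v = 1 ∨ v - u = 1)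
  symm := ⟨fun u v h => ⟨h.1.symm, h.2.symm⟩⟩
  loopless := ⟨fun u h => h.1 rfl⟩

/-- The discrete torus `C_{2a} □ C_{2b}`, the Cartesian (box) product of the cycles of
lengths `2a` and `2b`. -/
def torusG (a b : ℕ) : SimpleGraph (ZMod (2 * a) × ZMod (2 * b)) :=
  SimpleGraph.boxProd (cycleG (2 * a)) (cycleG (2 * b))

/-- A closed walk is properly colored if any two cyclically consecutive edges receive
different colors. -/
def ProperlyColoredCycle {V : Type*} {G : SimpleGraph V} (c : Sym2 V → Bool) {v : V}
    (w : G.Walk v v) : Prop :=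
  ∀ p ∈ w.edges.zip (w.edges.rotate 1), c p.1 ≠ c p.2

section ColorChanges

variable {V : Type*} (c : Sym2 V → Bool)

lemma colorChanges_cons_le (e : Sym2 V) (l : List (Sym2 V)) :
    colorChanges c (e :: l) ≤ colorChanges c l + 1 := by
  cases l with
  | nil => simp [colorChanges]
  | cons f l => rw [colorChanges]; split <;> omega

lemma colorChanges_append_le (l₁ l₂ : List (Sym2 V)) :
    colorChanges c (l₁ ++ l₂) ≤ colorChanges c l₁ + colorChanges c l₂ + 1 := by
  induction l₁ with
  | nil => simp [colorChanges]
  | cons e l₁ ih =>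
    cases l₁ with
    | nil => simpa [colorChanges] using colorChanges_cons_le c e l₂
    | cons f l₁ =>
      simp only [List.cons_append, colorChanges] at ih ⊢
      omega

lemma colorChanges_eq_zero_of_forall_eq {t : Bool} :
    ∀ l : List (Sym2 V), (∀ e ∈ l, c e = t) → colorChanges c l = 0
  | [], _ | [_], _ => rfl
  | e :: f :: l, h => by
    rw [colorChanges,
      colorChanges_eq_zero_of_forall_eq (f :: l) fun e' he' => h e' (List.mem_cons_of_mem _ he'),
      h e (by simp), h f (by simp), if_pos rfl]

lemma colorChanges_append_le_one {t s : Bool} {l₁ l₂ : List (Sym2 V)}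
    (h₁ : ∀ e ∈ l₁, c e = t) (h₂ : ∀ e ∈ l₂, c e = s) : colorChanges c (l₁ ++ l₂) ≤ 1 := by
  simpa [colorChanges_eq_zero_of_forall_eq c l₁ h₁, colorChanges_eq_zero_of_forall_eq c l₂ h₂]
    using colorChanges_append_le c l₁ l₂

end ColorChanges

namespace SimpleGraph

lemma Walk.apply_eq_of_forall_adj {V β : Type*} {G : SimpleGraph V} {f : V → β}
    (hf : ∀ u v, G.Adj u v → f u = f v) : ∀ {u v : V}, G.Walk u v → f u = f v
  | _, _, .nil => rfl
  | _, _, .cons h w => (hf _ _ h).trans (apply_eq_of_forall_adj hf w)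

variable {α β : Type*} {G : SimpleGraph α} {H : SimpleGraph β} {c : Sym2 (α × β) → Bool}

lemma Walk.exists_adj_of_mem_edges_boxProdLeft {a₁ a₂ : α} {b : β} {w : G.Walk a₁ a₂}
    {e : Sym2 (α × β)} (he : e ∈ (w.boxProdLeft H b).edges) :
    ∃ x x', G.Adj x x' ∧ e = s((x, b), (x', b)) := by
  replace he : e ∈ (w.map (G.boxProdLeft H b).toHom).edges := he
  rw [Walk.edges_map] at he
  obtain ⟨e', he', rfl⟩ := List.mem_map.1 he
  induction e' using Sym2.ind with
  | _ x x' => exact ⟨x, x', w.edges_subset_edgeSet he', rfl⟩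

lemma Walk.exists_adj_of_mem_edges_boxProdRight {b₁ b₂ : β} {a : α} {w : H.Walk b₁ b₂}
    {e : Sym2 (α × β)} (he : e ∈ (w.boxProdRight G a).edges) :
    ∃ y y', H.Adj y y' ∧ e = s((a, y), (a, y')) := by
  replace he : e ∈ (w.map (G.boxProdRight H a).toHom).edges := he
  rw [Walk.edges_map] at he
  obtain ⟨e', he', rfl⟩ := List.mem_map.1 he
  induction e' using Sym2.ind with
  | _ y y' => exact ⟨y, y', w.edges_subset_edgeSet he', rfl⟩

/-- The square `(x', y) → (x, y) → (x, y') → (x', y') → (x', y)` of `G □ H`. -/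
def boxProdSquare {x x' : α} {y y' : β} (hx : G.Adj x x') (hy : H.Adj y y') :
    (G □ H).Walk (x', y) (x', y) :=
  .cons (boxProd_adj_left.2 hx.symm) <| .cons (boxProd_adj_right.2 hy) <|
    .cons (boxProd_adj_left.2 hx) <| .cons (boxProd_adj_right.2 hy.symm) .nil

lemma boxProdSquare_isCycle {x x' : α} {y y' : β} (hx : G.Adj x x') (hy : H.Adj y y') :
    (boxProdSquare hx hy).IsCycle := by
  simp [boxProdSquare, Walk.cons_isCycle_iff, Walk.cons_isPath_iff, hx.ne, hy.ne, hy.ne.symm]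

lemma color_ne_of_squares_proper
    (hc : ∀ (v : α × β) (w : (G □ H).Walk v v),
      w.IsCycle → w.length = 4 → ProperlyColoredCycle c w)
    {x x' : α} {y y' : β} (hx : G.Adj x x') (hy : H.Adj y y') :
    c s((x, y), (x', y)) ≠ c s((x, y), (x, y')) := by
  rw [Sym2.eq_swap]
  exact hc _ _ (boxProdSquare_isCycle hx hy) rfl (_, _) (by simp [boxProdSquare, List.rotate])

theorem exists_color_of_squares_proper [Nontrivial α] [Nontrivial β]
    (hG : G.Connected) (hH : H.Connected)
    (hc : ∀ (v : α × β) (w : (G □ H).Walk v v),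
      w.IsCycle → w.length = 4 → ProperlyColoredCycle c w) :
    ∃ t : Bool, (∀ x x' y, G.Adj x x' → c s((x, y), (x', y)) = t) ∧
      (∀ x y y', H.Adj y y' → c s((x, y), (x, y')) = !t) := by
  choose g hg using hG.preconnected.exists_adj_of_nontrivial
  choose k hk using hH.preconnected.exists_adj_of_nontrivial
  set φ : α × β → Bool := fun p => c s(p, (g p.1, p.2))
  have hGφ : ∀ x x' y, G.Adj x x' → c s((x, y), (x', y)) = φ (x, y) := fun x x' y h =>
    (Bool.eq_not_iff.2 (color_ne_of_squares_proper hc h (hk y))).trans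
      (Bool.eq_not_iff.2 (color_ne_of_squares_proper hc (hg x) (hk y))).symm
  have hHφ : ∀ x y y', H.Adj y y' → c s((x, y), (x, y')) = !φ (x, y) := fun x y y' h =>
    Bool.eq_not_iff.2 (color_ne_of_squares_proper hc (hg x) h).symm
  have hφ : ∀ p q, (G □ H).Adj p q → φ p = φ q := by
    rintro ⟨x, y⟩ ⟨x', y'⟩ (⟨h, rfl : y = y'⟩ | ⟨h, rfl : x = x'⟩)
    · rw [← hGφ _ _ _ h, ← hGφ _ _ _ h.symm, Sym2.eq_swap]
    · apply Bool.not_inj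
      rw [← hHφ _ _ _ h, ← hHφ _ _ _ h.symm, Sym2.eq_swap]
  have hφ_const : ∀ p q, φ p = φ q := fun p q =>
    ((hG.boxProd hH).preconnected p q).elim (Walk.apply_eq_of_forall_adj hφ)
  refine ⟨φ (Classical.arbitrary _), fun x x' y h => ?_, fun x y y' h => ?_⟩
  · rw [hGφ _ _ _ h, hφ_const]
  · rw [hHφ _ _ _ h, hφ_const]

theorem exists_walk_colorChanges_le_one (hG : G.Preconnected) (hH : H.Preconnected) {t s : Bool}
    (hGc : ∀ x x' y, G.Adj x x' → c s((x, y), (x', y)) = t)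
    (hHc : ∀ x y y', H.Adj y y' → c s((x, y), (x, y')) = s) (u v : α × β) :
    ∃ w : (G □ H).Walk u v, colorChanges c w.edges ≤ 1 := by
  obtain ⟨w₁⟩ := hG u.1 v.1
  obtain ⟨w₂⟩ := hH u.2 v.2
  refine ⟨(w₁.boxProdLeft H u.2).append (w₂.boxProdRight G v.1), ?_⟩
  rw [Walk.edges_append]
  refine colorChanges_append_le_one c (t := t) (s := s) (fun e he => ?_) (fun e he => ?_)
  · obtain ⟨x, x', h, rfl⟩ := Walk.exists_adj_of_mem_edges_boxProdLeft he
    exact hGc _ _ _ h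
  · obtain ⟨y, y', h, rfl⟩ := Walk.exists_adj_of_mem_edges_boxProdRight he
    exact hHc _ _ _ h

end SimpleGraph

lemma cycleG_reachable_add_one {n : ℕ} (x : ZMod n) : (cycleG n).Reachable x (x + 1) := by
  by_cases h : x = x + 1
  · rw [← h]
  · exact Adj.reachable ⟨h, Or.inr (add_sub_cancel_left x 1)⟩

lemma cycleG_connected (n : ℕ) : (cycleG n).Connected := by
  refine ⟨fun u v => ?_⟩
  suffices h : ∀ k : ℤ, (cycleG n).Reachable u (u + k) by
    obtain ⟨k, hk⟩ := ZMod.intCast_surjective (v - u)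
    simpa [hk] using h k
  intro k
  induction k using Int.induction_on with
  | zero => simp
  | succ k ih =>
    rw [Int.cast_add, Int.cast_one, ← add_assoc]
    exact ih.trans (cycleG_reachable_add_one _)
  | pred k ih =>
    rw [Int.cast_sub, Int.cast_one, ← add_sub_assoc]
    have h := cycleG_reachable_add_one (u + ((-k : ℤ) : ZMod n) - 1)
    rw [sub_add_cancel] at h
    exact ih.trans h.symm

theorem torus_all_squares_proper_structure_general
    {a b : ℕ}
    (c : Sym2 (ZMod (2 * a) × ZMod (2 * b)) → Bool)
    (hc : ∀ (v : ZMod (2 * a) × ZMod (2 * b)) (w : (torusG a b).Walk v v),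
      w.IsCycle → w.length = 4 → ProperlyColoredCycle c w) :
    (∃ t : Bool,
      (∀ (x x' : ZMod (2 * a)) (y : ZMod (2 * b)),
        (cycleG (2 * a)).Adj x x' → c s((x, y), (x', y)) = t) ∧
      (∀ (x : ZMod (2 * a)) (y y' : ZMod (2 * b)),
        (cycleG (2 * b)).Adj y y' → c s((x, y), (x, y')) = !t)) ∧
    ∀ u v : ZMod (2 * a) × ZMod (2 * b),
      ∃ w : (torusG a b).Walk u v, colorChanges c w.edges ≤ 1 := by
  have : Nontrivial (ZMod (2 * a)) := ZMod.nontrivial_iff.2 (by omega)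
  have : Nontrivial (ZMod (2 * b)) := ZMod.nontrivial_iff.2 (by omega)
  obtain ⟨t, hGc, hHc⟩ :=
    exists_color_of_squares_proper (cycleG_connected _) (cycleG_connected _) hc
  exact ⟨⟨t, hGc, hHc⟩, exists_walk_colorChanges_le_one (cycleG_connected _).preconnected
    (cycleG_connected _).preconnected hGc hHc⟩

/-- If every 4-cycle of `C_{2a} □ C_{2b}` (with `2 ≤ a ≤ b`) is
properly colored by `c`, then all edges in one coordinate direction get one color and
all edges in the other direction get the other color; consequently any two vertices
are joined by a walk that changes colors at most once. -/
theorem torus_all_squares_proper_structure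
    {a b : ℕ} (ha : 2 ≤ a) (hab : a ≤ b)
    (c : Sym2 (ZMod (2 * a) × ZMod (2 * b)) → Bool)
    (hc : ∀ (v : ZMod (2 * a) × ZMod (2 * b)) (w : (torusG a b).Walk v v),
      w.IsCycle → w.length = 4 → ProperlyColoredCycle c w) :
    (∃ t : Bool,
      (∀ (x x' : ZMod (2 * a)) (y : ZMod (2 * b)),
        (cycleG (2 * a)).Adj x x' → c s((x, y), (x', y)) = t) ∧
      (∀ (x : ZMod (2 * a)) (y y' : ZMod (2 * b)),
        (cycleG (2 * b)).Adj y y' → c s((x, y), (x, y')) = !t)) ∧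
    ∀ u v : ZMod (2 * a) × ZMod (2 * b),
      ∃ w : (torusG a b).Walk u v, colorChanges c w.edges ≤ 1 :=
  torus_all_squares_proper_structure_general c hc
end

section
/- Let m ≥ 2 and let c be the proper (alternating) 2-coloring of the edges of the cycle C_{2m}, in which any two adjacent edges receive different colors. Then for every vertex u of C_{2m}, every walk from u to the antipodal vertex of u (the vertex at distance m from u) changes colors at least m−1 times. -/
open SimpleGraph

/-! In a proper 2-coloring of a cycle of length `n > 2`, two consecutive edges of a walk have
the same color exactly when the walk backtracks. Lift the walk to `ℤ` by its signed
displacement. If the first step has direction `s = ±1` and the rest of the walk has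
displacement `E`, induction on the walk shows that the number of color changes is at least
both `s * E` and `-(s * E) - 1`; hence at least `|s + E| - 1`. A walk from `u` to `u + m` in
`C_{2m}` has displacement `≡ m (mod 2m)`, so of absolute value at least `m`. -/

namespace cycleG

variable {n : ℕ}

def stepSign (a b : ZMod n) : ℤ := if b - a = 1 then 1 else -1

def displacement : {u v : ZMod n} → (cycleG n).Walk u v → ℤ
  | _, _, .nil => 0
  | u, _, .cons (v := v) _ p => stepSign u v + displacement p

theorem adj_iff {a b : ZMod n} : (cycleG n).Adj a b ↔ a ≠ b ∧ (b - a = 1 ∨ b - a = -1) := by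
  refine and_congr_right fun _ => or_comm.trans (or_congr_right ?_)
  constructor <;> intro h <;> linear_combination -h

theorem stepSign_eq_one_or {a b : ZMod n} : stepSign a b = 1 ∨ stepSign a b = -1 := by
  unfold stepSign; split_ifs <;> simp

theorem stepSign_mul_self (a b : ZMod n) : stepSign a b * stepSign a b = 1 := by
  rcases stepSign_eq_one_or (a := a) (b := b) with h | h <;> simp [h]

theorem cast_stepSign {a b : ZMod n} (h : (cycleG n).Adj a b) :
    (stepSign a b : ZMod n) = b - a := by
  unfold stepSign
  split_ifs with h1
  · simp [h1]
  · simp [(adj_iff.1 h).2.resolve_left h1]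

theorem stepSign_swap (hn : 2 < n) {a b : ZMod n} (h : (cycleG n).Adj a b) :
    stepSign b a = -stepSign a b := by
  have : Fact (2 < n) := ⟨hn⟩
  have hne : (-1 : ZMod n) ≠ 1 := ZMod.neg_one_ne_one
  rcases (adj_iff.1 h).2 with h | h
  · simp [stepSign, h, show a - b = -1 by linear_combination -h, hne]
  · simp [stepSign, h, show a - b = 1 by linear_combination -h, hne]

theorem sub_eq_sub_of_adj_of_ne {a b d : ZMod n} (hab : (cycleG n).Adj a b) (hbd : (cycleG n).Adj b d)
    (hda : d ≠ a) : d - b = b - a := by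
  rcases (adj_iff.1 hab).2 with h | h <;> rcases (adj_iff.1 hbd).2 with h' | h'
  · rw [h, h']
  · exact absurd (by linear_combination h' + h) hda
  · exact absurd (by linear_combination h' + h) hda
  · rw [h, h']

theorem cast_displacement {u v : ZMod n} (w : (cycleG n).Walk u v) :
    (displacement w : ZMod n) = v - u := by
  induction w with
  | nil => simp [displacement]
  | cons h p ih => rw [displacement, Int.cast_add, ih, cast_stepSign h]; ring

variable {c : Sym2 (ZMod n) → Bool}

theorem color_ne_of_sub_eq (hc : ∀ u : ZMod n, c s(u - 1, u) ≠ c s(u, u + 1)) {a b d : ZMod n}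
    (hab : (cycleG n).Adj a b) (hd : d - b = b - a) : c s(a, b) ≠ c s(b, d) := by
  rcases (adj_iff.1 hab).2 with h | h
  · obtain rfl : a = b - 1 := by linear_combination -h
    obtain rfl : d = b + 1 := by linear_combination hd + h
    exact hc b
  · obtain rfl : a = b + 1 := by linear_combination -h
    obtain rfl : d = b - 1 := by linear_combination hd + h
    rw [Sym2.eq_swap (a := b + 1), Sym2.eq_swap (a := b) (b := b - 1)]
    exact (hc b).symm

theorem colorChanges_cons_bounds (hn : 2 < n) (hc : ∀ u : ZMod n, c s(u - 1, u) ≠ c s(u, u + 1))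
    {a b v : ZMod n} (h : (cycleG n).Adj a b) (w : (cycleG n).Walk b v) :
    stepSign a b * displacement w ≤ colorChanges c (s(a, b) :: w.edges) ∧
      -(stepSign a b * displacement w) ≤ colorChanges c (s(a, b) :: w.edges) + 1 := by
  induction w generalizing a with
  | nil => simp [displacement, colorChanges]
  | @cons b d v h' p ih =>
    obtain ⟨ih₁, ih₂⟩ := ih h'
    rw [Walk.edges_cons, colorChanges, displacement]
    by_cases hda : d = a
    · subst hda
      rw [stepSign_swap hn h, neg_mul] at ih₁ ih₂
      rw [if_pos (congrArg c Sym2.eq_swap), stepSign_swap hn h, mul_add, mul_neg,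
        stepSign_mul_self]
      omega
    · have hdir := sub_eq_sub_of_adj_of_ne h h' hda
      have hs : stepSign b d = stepSign a b := by unfold stepSign; rw [hdir]
      rw [hs] at ih₁ ih₂
      rw [if_neg (color_ne_of_sub_eq hc h hdir), mul_add, hs, stepSign_mul_self]
      omega

theorem abs_displacement_le (hn : 2 < n) (hc : ∀ u : ZMod n, c s(u - 1, u) ≠ c s(u, u + 1))
    {u v : ZMod n} (w : (cycleG n).Walk u v) : |displacement w| ≤ colorChanges c w.edges + 1 := by
  cases w with
  | nil => simp [displacement, colorChanges]
  | cons h p =>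
    obtain ⟨h₁, h₂⟩ := colorChanges_cons_bounds hn hc h p
    rw [Walk.edges_cons, displacement, abs_le]
    rcases stepSign_eq_one_or (a := u) with hs | hs <;> rw [hs] at h₁ h₂ ⊢ <;> constructor <;> omega

end cycleG

theorem le_abs_of_intCast_eq {m : ℕ} {D : ℤ} (h : (D : ZMod (2 * m)) = m) : (m : ℤ) ≤ |D| := by
  rw [← Int.cast_natCast, ZMod.intCast_eq_intCast_iff_dvd_sub] at h
  obtain ⟨k, hk⟩ := h
  push_cast at hk
  rw [le_abs]
  rcases le_or_gt k 0 with hk0 | hk0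
  · left; nlinarith
  · right; nlinarith

/-- If `c` is the proper (alternating) 2-coloring of the cycle
`C_{2m}` (`m ≥ 2`), i.e. any two adjacent edges receive different colors, then every
walk from a vertex `u` to its antipodal vertex `u + m` changes colors at least
`m - 1` times. -/
theorem proper_cycle_coloring_many_switches
    {m : ℕ} (hm : 2 ≤ m) (c : Sym2 (ZMod (2 * m)) → Bool)
    (hc : ∀ u : ZMod (2 * m), c s(u - 1, u) ≠ c s(u, u + 1))
    (u : ZMod (2 * m)) (w : (cycleG (2 * m)).Walk u (u + (m : ZMod (2 * m)))) :
    m - 1 ≤ colorChanges c w.edges := by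
  have hD : (m : ℤ) ≤ |cycleG.displacement w| :=
    le_abs_of_intCast_eq (by rw [cycleG.cast_displacement, add_sub_cancel_left])
  have := cycleG.abs_displacement_le (by omega) hc w
  omega
end

section
/- Let a and b be integers with 2 ≤ a ≤ b, let G = C_{2a} □ C_{2b}, let c be a 2-coloring of the edges of G, and fix a start vertex (x,y). For every j with 1 ≤ j ≤ a there exists a j-ascending diagonal P starting at (x,y) such that for every i ≤ j, the initial segment of P that is an i-ascending diagonal starting at (x,y) has the minimum number of color changes among all i-ascending diagonals starting at (x,y). -/
open SimpleGraph

/-- A `j`-ascending diagonal starting at `(x, y)`: a walk of length `2j` from `(x, y)`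
to `(x + j, y + j)` visiting the diagonal points `(x + i, y + i)` in order. -/
def IsAscDiag (a b j : ℕ) (x : ZMod (2 * a)) (y : ZMod (2 * b))
    (w : (torusG a b).Walk (x, y) (x + (j : ZMod (2 * a)), y + (j : ZMod (2 * b)))) :
    Prop :=
  w.length = 2 * j ∧
    ∀ i : ℕ, i ≤ j → w.getVert (2 * i) = (x + (i : ZMod (2 * a)), y + (i : ZMod (2 * b)))


/-!
A `j`-ascending diagonal is determined by the sequence `σ : ℕ → Bool` recording which coordinate
moves first in each step. Its number of color changes is a sum of step costs, the cost of step
`k + 1` depending only on `σ k` and `σ (k + 1)` and changing by at most one with `σ k`. For such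
costs optimal prefixes extend: if the `n`-prefix of an optimal `(n + 1)`-sequence is not optimal,
it costs at least one more than an optimal one, so swapping in an optimal `n`-prefix (lazy by
induction) saves at least one and costs at most one at the junction.
-/

section PathCost

variable {α : Type*} (w₀ : α → ℕ) (w : ℕ → α → α → ℕ)

/-- The level-`n` cost involves the `n + 1` choices `σ 0, …, σ n`. -/
def pathCost (σ : ℕ → α) : ℕ → ℕ
  | 0 => w₀ (σ 0)
  | k + 1 => pathCost σ k + w k (σ k) (σ (k + 1))

def IsOptimalAt (n : ℕ) (σ : ℕ → α) : Prop :=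
  ∀ τ, pathCost w₀ w σ n ≤ pathCost w₀ w τ n

variable {w₀ w}

lemma pathCost_congr {σ τ : ℕ → α} {n : ℕ} (h : ∀ i ≤ n, σ i = τ i) :
    pathCost w₀ w σ n = pathCost w₀ w τ n := by
  induction n with
  | zero => simp only [pathCost, h 0 le_rfl]
  | succ n ih =>
    simp only [pathCost, ih fun i hi => h i (by omega), h n (by omega), h (n + 1) le_rfl]

lemma IsOptimalAt.of_pathCost_le {n : ℕ} {σ τ : ℕ → α} (hτ : IsOptimalAt w₀ w n τ)
    (h : pathCost w₀ w σ n ≤ pathCost w₀ w τ n) : IsOptimalAt w₀ w n σ :=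
  fun ρ => h.trans (hτ ρ)

section Update

variable (σ : ℕ → α) (n : ℕ) (t : α)

lemma pathCost_update_of_le {i : ℕ} (hi : i ≤ n) :
    pathCost w₀ w (Function.update σ (n + 1) t) i = pathCost w₀ w σ i :=
  pathCost_congr fun _ hk => Function.update_of_ne (by omega) _ _

lemma pathCost_update_succ :
    pathCost w₀ w (Function.update σ (n + 1) t) (n + 1) = pathCost w₀ w σ n + w n (σ n) t := by
  rw [pathCost, pathCost_update_of_le σ n t le_rfl, Function.update_self,
    Function.update_of_ne n.succ_ne_self.symm]

lemma isOptimalAt_update_iff {i : ℕ} (hi : i ≤ n) :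
    IsOptimalAt w₀ w i (Function.update σ (n + 1) t) ↔ IsOptimalAt w₀ w i σ := by
  simp only [IsOptimalAt, pathCost_update_of_le σ n t hi]

end Update

variable (w₀ w) in
lemma exists_isOptimalAt [Nonempty α] (n : ℕ) : ∃ σ, IsOptimalAt w₀ w n σ :=
  ⟨Function.argmin (pathCost w₀ w · n), fun τ => Function.argmin_le (pathCost w₀ w · n) τ⟩

lemma exists_pathCost_le_forall_lt_isOptimalAt (hw : ∀ k s s' t, w k s t ≤ w k s' t + 1)
    (n : ℕ) (τ : ℕ → α) :
    ∃ σ, σ n = τ n ∧ pathCost w₀ w σ n ≤ pathCost w₀ w τ n ∧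
      ∀ i < n, IsOptimalAt w₀ w i σ := by
  induction n generalizing τ with
  | zero => exact ⟨τ, rfl, le_rfl, by omega⟩
  | succ n ih =>
    have key : ∃ σ, (∀ i ≤ n, IsOptimalAt w₀ w i σ) ∧
        pathCost w₀ w σ n + w n (σ n) (τ (n + 1)) ≤ pathCost w₀ w τ (n + 1) := by
      by_cases hτ : IsOptimalAt w₀ w n τ
      · obtain ⟨σ, hσn, hle, hopt⟩ := ih τ
        refine ⟨σ, fun i hi => ?_, by simpa only [pathCost, hσn] using Nat.add_le_add_right hle _⟩
        rcases hi.lt_or_eq with hi | rfl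
        exacts [hopt i hi, hτ.of_pathCost_le hle]
      · have : Nonempty α := ⟨τ 0⟩
        obtain ⟨μ, hμ⟩ := exists_isOptimalAt w₀ w n
        obtain ⟨σ, -, hle, hopt⟩ := ih μ
        have hσ : IsOptimalAt w₀ w n σ := hμ.of_pathCost_le hle
        obtain ⟨ρ, hρ⟩ : ∃ ρ, pathCost w₀ w ρ n < pathCost w₀ w τ n := by
          simpa [IsOptimalAt] using hτ
        refine ⟨σ, fun i hi => ?_, ?_⟩
        · rcases hi.lt_or_eq with hi | rfl
          exacts [hopt i hi, hσ]
        -- a non-optimal prefix costs at least one more, which pays for the changed junction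
        have := (hσ ρ).trans_lt hρ
        have := hw n (σ n) (τ n) (τ (n + 1))
        simp only [pathCost]
        omega
    obtain ⟨σ, hopt, hle⟩ := key
    refine ⟨Function.update σ (n + 1) (τ (n + 1)), Function.update_self .., ?_, fun i hi => ?_⟩
    · rwa [pathCost_update_succ]
    · rw [isOptimalAt_update_iff σ n _ (by omega)]
      exact hopt i (by omega)

lemma exists_forall_le_isOptimalAt [Nonempty α] (hw : ∀ k s s' t, w k s t ≤ w k s' t + 1)
    (n : ℕ) : ∃ σ, ∀ i ≤ n, IsOptimalAt w₀ w i σ := by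
  obtain ⟨τ, hτ⟩ := exists_isOptimalAt w₀ w n
  obtain ⟨σ, -, hle, hopt⟩ := exists_pathCost_le_forall_lt_isOptimalAt hw n τ
  refine ⟨σ, fun i hi => ?_⟩
  rcases hi.lt_or_eq with hi | rfl
  exacts [hopt i hi, hτ.of_pathCost_le hle]

end PathCost

lemma colorChanges_append_cons {V : Type*} (c : Sym2 V → Bool) (l : List (Sym2 V)) (e : Sym2 V)
    (m : List (Sym2 V)) :
    colorChanges c (l ++ e :: m) = colorChanges c (l ++ [e]) + colorChanges c (e :: m) := by
  induction l with
  | nil => simp [colorChanges]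
  | cons f l ih =>
    cases l with
    | nil => simp [colorChanges]
    | cons g l => simp only [List.cons_append, colorChanges] at ih ⊢; omega

lemma cycleG_adj_add_one {n : ℕ} (hn : n ≠ 1) (u : ZMod n) : (cycleG n).Adj u (u + 1) :=
  ⟨by simpa using mt ZMod.one_eq_zero_iff.mp hn, Or.inr (add_sub_cancel_left u 1)⟩

lemma SimpleGraph.Walk.take_edges_add_one {V : Type*} {G : SimpleGraph V} {u v : V}
    (p : G.Walk u v) {n : ℕ} (h : n < p.length) :
    p.edges.take (n + 1) = p.edges.take n ++ [s(p.getVert n, p.getVert (n + 1))] := by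
  rw [List.take_add_one, List.getElem?_eq_getElem (by simpa), Walk.getElem_edges]
  rfl

section Diagonal

variable {a b : ℕ} (x : ZMod (2 * a)) (y : ZMod (2 * b))

def diagPt (k : ℕ) : ZMod (2 * a) × ZMod (2 * b) := (x + k, y + k)

/-- The middle vertex of the `k`-th step of a diagonal, which moves the first coordinate first
iff `t`. -/
def diagMid (k : ℕ) : Bool → ZMod (2 * a) × ZMod (2 * b)
  | true => (x + k + 1, y + k)
  | false => (x + k, y + k + 1)

lemma diagPt_zero : diagPt x y 0 = (x, y) := by simp [diagPt]

lemma diagPt_succ (k : ℕ) : diagPt x y (k + 1) = (x + k + 1, y + k + 1) := by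
  simp [diagPt, add_assoc]

lemma torusG_adj_diagPt_diagMid (k : ℕ) (t : Bool) :
    (torusG a b).Adj (diagPt x y k) (diagMid x y k t) := by
  cases t
  · exact Or.inr ⟨cycleG_adj_add_one (by omega) _, rfl⟩
  · exact Or.inl ⟨cycleG_adj_add_one (by omega) _, rfl⟩

lemma torusG_adj_diagMid_diagPt_succ (k : ℕ) (t : Bool) :
    (torusG a b).Adj (diagMid x y k t) (diagPt x y (k + 1)) := by
  rw [diagPt_succ]
  cases t
  · exact Or.inl ⟨cycleG_adj_add_one (by omega) _, rfl⟩
  · exact Or.inr ⟨cycleG_adj_add_one (by omega) _, rfl⟩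

lemma exists_eq_diagMid_of_adj {k : ℕ} {z : ZMod (2 * a) × ZMod (2 * b)}
    (h₁ : (torusG a b).Adj (diagPt x y k) z) (h₂ : (torusG a b).Adj z (diagPt x y (k + 1))) :
    ∃ t, z = diagMid x y k t := by
  obtain ⟨z₁, z₂⟩ := z
  rw [diagPt_succ] at h₂
  simp only [torusG, boxProd_adj, diagPt] at h₁ h₂
  rcases h₁ with ⟨-, rfl⟩ | ⟨-, rfl⟩ <;> rcases h₂ with ⟨-, hz⟩ | ⟨-, hz⟩
  · exact absurd hz (cycleG_adj_add_one (by omega) _).1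
  · exact ⟨true, by rw [hz]; rfl⟩
  · exact ⟨false, by rw [hz]; rfl⟩
  · exact absurd hz (cycleG_adj_add_one (by omega) _).1

def diagStep (k : ℕ) (t : Bool) : (torusG a b).Walk (diagPt x y k) (diagPt x y (k + 1)) :=
  .cons (torusG_adj_diagPt_diagMid x y k t) (.cons (torusG_adj_diagMid_diagPt_succ x y k t) .nil)

def diagWalk (σ : ℕ → Bool) : (n : ℕ) → (torusG a b).Walk (x, y) (diagPt x y n)
  | 0 => Walk.nil.copy rfl (diagPt_zero x y).symm
  | n + 1 => (diagWalk σ n).append (diagStep x y n (σ n))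

variable (σ : ℕ → Bool)

lemma length_diagWalk (n : ℕ) : (diagWalk x y σ n).length = 2 * n := by
  induction n with
  | zero => simp [diagWalk]
  | succ n ih => simp [diagWalk, diagStep, ih]; ring

lemma getVert_diagWalk {n i : ℕ} (hi : i ≤ n) :
    (diagWalk x y σ n).getVert (2 * i) = diagPt x y i := by
  induction n with
  | zero => simp [show i = 0 by omega, diagWalk, diagPt_zero]
  | succ n ih =>
    rw [diagWalk, Walk.getVert_append, length_diagWalk]
    split_ifs with h
    · exact ih (by omega)
    · obtain rfl | rfl : i = n ∨ i = n + 1 := by omega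
      · simp
      · simp [diagStep, show 2 * (n + 1) - 2 * n = 2 by omega]

lemma isAscDiag_diagWalk (n : ℕ) :
    IsAscDiag a b n x y (diagWalk x y σ n) :=
  ⟨length_diagWalk x y σ n, fun _ hi => getVert_diagWalk x y σ hi⟩

lemma edges_diagWalk_succ (n : ℕ) :
    (diagWalk x y σ (n + 1)).edges = (diagWalk x y σ n).edges ++ (diagStep x y n (σ n)).edges :=
  Walk.edges_append _ _

lemma take_edges_diagWalk {i n : ℕ} (h : i ≤ n) :
    (diagWalk x y σ n).edges.take (2 * i) = (diagWalk x y σ i).edges := by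
  have hpre : (diagWalk x y σ i).edges <+: (diagWalk x y σ n).edges := by
    induction n, h using Nat.le_induction with
    | base => exact List.prefix_refl _
    | succ n _ ih => exact ih.trans (by rw [edges_diagWalk_succ]; exact List.prefix_append _ _)
  rw [List.prefix_iff_eq_take.mp hpre, Walk.length_edges, length_diagWalk]

lemma exists_edges_eq_diagWalk {i : ℕ}
    (w : (torusG a b).Walk (x, y) (x + (i : ZMod (2 * a)), y + (i : ZMod (2 * b))))
    (hw : IsAscDiag a b i x y w) : ∃ σ, w.edges = (diagWalk x y σ i).edges := by
  obtain ⟨hlen, hpt⟩ := hw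
  have hmid : ∀ q, ∃ t, q < i → w.getVert (2 * q + 1) = diagMid x y q t := by
    intro q
    by_cases hq : q < i
    · have h₁ := w.adj_getVert_succ (i := 2 * q) (by omega)
      have h₂ := w.adj_getVert_succ (i := 2 * q + 1) (by omega)
      rw [hpt q hq.le] at h₁
      rw [show 2 * q + 1 + 1 = 2 * (q + 1) by ring, hpt (q + 1) hq] at h₂
      obtain ⟨t, ht⟩ := exists_eq_diagMid_of_adj x y h₁ h₂
      exact ⟨t, fun _ => ht⟩
    · exact ⟨true, fun h => absurd h hq⟩
  choose σ hσ using hmid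
  refine ⟨σ, ?_⟩
  have key : ∀ m ≤ i, w.edges.take (2 * m) = (diagWalk x y σ m).edges := by
    intro m hm
    induction m with
    | zero => simp [diagWalk]
    | succ m ih =>
      rw [show 2 * (m + 1) = 2 * m + 1 + 1 by ring, w.take_edges_add_one (by omega),
        w.take_edges_add_one (by omega), ih (by omega), edges_diagWalk_succ, hpt m (by omega),
        hσ m (by omega), show 2 * m + 1 + 1 = 2 * (m + 1) by ring, hpt (m + 1) hm,
        List.append_assoc]
      rfl
  rw [← key i le_rfl, List.take_of_length_le (by rw [Walk.length_edges, hlen])]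

end Diagonal

section ColorChanges

variable {a b : ℕ} (x : ZMod (2 * a)) (y : ZMod (2 * b))
  (c : Sym2 (ZMod (2 * a) × ZMod (2 * b)) → Bool)

def diagFirstCost (t : Bool) : ℕ := colorChanges c (diagStep x y 0 t).edges

def diagStepCost (k : ℕ) (s t : Bool) : ℕ :=
  colorChanges c (s(diagMid x y k s, diagPt x y (k + 1)) :: (diagStep x y (k + 1) t).edges)

lemma diagStepCost_le (k : ℕ) (s s' t : Bool) :
    diagStepCost x y c k s t ≤ diagStepCost x y c k s' t + 1 := by
  simp only [diagStepCost, diagStep, Walk.edges_cons, Walk.edges_nil, colorChanges]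
  split_ifs <;> omega

lemma colorChanges_diagWalk_succ (σ : ℕ → Bool) (k : ℕ) :
    colorChanges c (diagWalk x y σ (k + 1)).edges =
      pathCost (diagFirstCost x y c) (diagStepCost x y c) σ k := by
  induction k with
  | zero => simp [diagWalk, diagFirstCost, pathCost]
  | succ k ih =>
    rw [edges_diagWalk_succ, pathCost, ← ih, edges_diagWalk_succ]
    simp only [diagStep, diagStepCost, Walk.edges_cons, Walk.edges_nil]
    rw [show ∀ (l : List (Sym2 _)) e₁ e₂ m, l ++ [e₁, e₂] ++ m = l ++ [e₁] ++ e₂ :: m by simp,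
      colorChanges_append_cons]
    simp

end ColorChanges

theorem exists_lazy_ascending_diagonal_general
    {a b : ℕ}
    (c : Sym2 (ZMod (2 * a) × ZMod (2 * b)) → Bool)
    (x : ZMod (2 * a)) (y : ZMod (2 * b)) (j : ℕ) :
    ∃ w : (torusG a b).Walk (x, y) (x + (j : ZMod (2 * a)), y + (j : ZMod (2 * b))),
      IsAscDiag a b j x y w ∧
      ∀ i : ℕ, i ≤ j →
        ∀ w' : (torusG a b).Walk (x, y) (x + (i : ZMod (2 * a)), y + (i : ZMod (2 * b))),
          IsAscDiag a b i x y w' →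
          colorChanges c (w.edges.take (2 * i)) ≤ colorChanges c w'.edges := by
  obtain ⟨σ, hσ⟩ := exists_forall_le_isOptimalAt (diagStepCost_le x y c) (j - 1)
  refine ⟨_, isAscDiag_diagWalk x y σ j, fun i hi w' hw' => ?_⟩
  obtain ⟨τ, hτ⟩ := exists_edges_eq_diagWalk x y w' hw'
  change colorChanges c ((diagWalk x y σ j).edges.take (2 * i)) ≤ _
  rw [take_edges_diagWalk x y σ hi, hτ]
  cases i with
  | zero => exact le_rfl
  | succ i =>
    rw [colorChanges_diagWalk_succ, colorChanges_diagWalk_succ]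
    exact hσ i (by omega) τ

/-- (Existence of lazy diagonals.)  For `2 ≤ a ≤ b`, any 2-coloring
of `C_{2a} □ C_{2b}`, any start `(x, y)` and any `1 ≤ j ≤ a`, there is a `j`-ascending
diagonal starting at `(x, y)` each of whose initial `i`-ascending diagonal segments
(consisting of its first `2i` edges) has the minimum number of color changes among all
`i`-ascending diagonals starting at `(x, y)`. -/
theorem exists_lazy_ascending_diagonal
    {a b : ℕ} (ha : 2 ≤ a) (hab : a ≤ b)
    (c : Sym2 (ZMod (2 * a) × ZMod (2 * b)) → Bool)
    (x : ZMod (2 * a)) (y : ZMod (2 * b)) (j : ℕ) (hj1 : 1 ≤ j) (hja : j ≤ a) :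
    ∃ w : (torusG a b).Walk (x, y) (x + (j : ZMod (2 * a)), y + (j : ZMod (2 * b))),
      IsAscDiag a b j x y w ∧
      ∀ i : ℕ, i ≤ j →
        ∀ w' : (torusG a b).Walk (x, y) (x + (i : ZMod (2 * a)), y + (i : ZMod (2 * b))),
          IsAscDiag a b i x y w' →
          colorChanges c (w.edges.take (2 * i)) ≤ colorChanges c w'.edges :=
  exists_lazy_ascending_diagonal_general c x y j
end
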